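/- arXiv:0901.1574 — 4 statements merged into one kernel-verified Lean document; each statement's English description precedes it below -/
import Mathlib

section
/- For all positive integers m and n, the Fuß-Catalan number (1/(mn+1)) * binomial((m+1)n, n) is a positive integer. -/
/-! Writing `N = (m + 1) n`, the identity `n · C(N, n) = (N - n + 1) · C(N, n - 1)` shows that
`N - n + 1 = mn + 1` divides `n · C(N, n)`; since `mn + 1` is coprime to `n`, it divides `C(N, n)`. -/

theorem Nat.sub_dvd_choose_succ_of_coprime {N k : ℕ} (h : (N - k).Coprime (k + 1)) :
    N - k ∣ N.choose (k + 1) :=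
  h.dvd_of_dvd_mul_right ⟨N.choose k, (Nat.choose_succ_right_eq N k).trans (mul_comm _ _)⟩

theorem Nat.mul_add_one_dvd_choose_succ_mul (m n : ℕ) :
    m * n + 1 ∣ ((m + 1) * n).choose n := by
  cases n with
  | zero => simp
  | succ k =>
    have hsub : (m + 1) * (k + 1) - k = m * (k + 1) + 1 := by
      rw [add_one_mul]; omega
    have hcop : (m * (k + 1) + 1).Coprime (k + 1) := by simp
    rw [← hsub] at hcop ⊢
    exact Nat.sub_dvd_choose_succ_of_coprime hcop

theorem fuss_catalan_pos_integer_general (m n : ℕ) :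
    ∃ c : ℕ, 0 < c ∧ Nat.choose ((m + 1) * n) n = (m * n + 1) * c := by
  obtain ⟨c, hc⟩ := Nat.mul_add_one_dvd_choose_succ_mul m n
  have hchoose : 0 < ((m + 1) * n).choose n :=
    Nat.choose_pos (Nat.le_mul_of_pos_left n m.succ_pos)
  exact ⟨c, Nat.pos_of_mul_pos_left (hc ▸ hchoose), hc⟩

/-- The Fuß-Catalan number `Cat_n^(m) = (1/(mn+1)) * C((m+1)n, n)` is a positive integer:
`mn+1` divides the binomial coefficient, and the quotient is positive. -/
theorem fuss_catalan_pos_integer (m n : ℕ) (hm : 0 < m) (hn : 0 < n) :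
    ∃ c : ℕ, 0 < c ∧ Nat.choose ((m + 1) * n) n = (m * n + 1) * c :=
  fuss_catalan_pos_integer_general m n
end

section
/- For each positive integer m, the number of m-Dyck paths of semilength n equals the Fuß-Catalan number (1/(mn+1)) * binomial((m+1)n, n). -/
/-- An `m`-Dyck path of semilength `n`, encoded as a sequence `(a_1, …, a_n)` of non-negative
integers with `a_1 = 0` and `a_{i+1} ≤ a_i + m` (supported on `1, …, n`). -/
def IsMDyckPath (m n : ℕ) (a : ℕ → ℕ) : Prop :=
  a 1 = 0 ∧ (∀ i, 1 ≤ i → i < n → a (i + 1) ≤ a i + m) ∧ (∀ i, i = 0 ∨ n < i → a i = 0)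

/-!
Append an up-step to an `m`-Dyck path and read it as a cyclic word of length `N = (m+1)n + 1`
with `n` down-steps of size `m` and `mn + 1` up-steps of size `1`, so of total weight `1`.
By the cycle lemma, exactly one of the `N` rotations of any such word has all nonempty prefixes
of positive height, and these dominant words are exactly the words of `m`-Dyck paths. Double
counting pairs (word, rotation) gives `N · #paths = C(N, n)`, and
`C(N, n) · (mn + 1) = N · C(N - 1, n)`.
-/

open Finset

/-- The cycle lemma of Dvoretzky and Motzkin, for the prefix sums `f` of a periodic word of
total weight `1`. -/
theorem existsUnique_lt_forall_lt_add {f : ℕ → ℤ} {N : ℕ} (hN : 0 < N)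
    (hf : ∀ t, f (t + N) = f t + 1) :
    ∃! j, j < N ∧ ∀ k < N, f j < f (j + k + 1) := by
  have not_both : ∀ j j', j < j' → j' < N → (∀ k < N, f j < f (j + k + 1)) →
      ¬ ∀ k < N, f j' < f (j' + k + 1) := by
    intro j j' hjj' hj' hj hj'dom
    have h₁ := hj (j' - j - 1) (by omega)
    have h₂ := hj'dom (j + N - j' - 1) (by omega)
    rw [show j + (j' - j - 1) + 1 = j' by omega] at h₁
    rw [show j' + (j + N - j' - 1) + 1 = j + N by omega, hf] at h₂
    omega
  -- minimising `N * f i - i` over `[0, N)` picks the last minimiser of `f` there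
  obtain ⟨j, hj, hmin⟩ :=
    (range N).exists_min_image (fun i => N * f i - i) ⟨0, mem_range.2 hN⟩
  have hjN : j < N := mem_range.1 hj
  have hle : ∀ i < N, f j ≤ f i := by
    intro i hi
    have := hmin i (mem_range.2 hi)
    by_contra! h
    nlinarith
  have hlt : ∀ i < N, j < i → f j < f i := by
    intro i hi hji
    have := hmin i (mem_range.2 hi)
    by_contra! h
    have : (j : ℤ) < i := by exact_mod_cast hji
    nlinarith
  have hdom : ∀ k < N, f j < f (j + k + 1) := by
    intro k hk
    by_cases hwrap : j + k + 1 < N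
    · exact hlt _ hwrap (by omega)
    · rw [show j + k + 1 = (j + k + 1 - N) + N by omega, hf]
      linarith [hle (j + k + 1 - N) (by omega)]
  refine ⟨j, ⟨hjN, hdom⟩, fun j' ⟨hj'N, hj'⟩ => ?_⟩
  rcases lt_trichotomy j' j with h | rfl | h
  · exact absurd hdom (not_both j' j h hjN hj')
  · rfl
  · exact absurd hj' (not_both j j' h hj'N hdom)

namespace MDyck

section Words

variable {N : ℕ} [NeZero N]

/-- Height after `t` letters of the periodic word of length `N` with a down-step of size `m` at
each position in `S` and an up-step of size `1` elsewhere. -/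
def height (m : ℕ) (S : Finset (Fin N)) (t : ℕ) : ℤ :=
  t - (m + 1) * Nat.count (fun i => Fin.ofNat N i ∈ S) t

def IsDominant (m : ℕ) (S : Finset (Fin N)) : Prop :=
  ∀ k < N, 0 < height m S (k + 1)

instance (m : ℕ) (S : Finset (Fin N)) : Decidable (IsDominant m S) := by
  unfold IsDominant; infer_instance

def rotate (j : Fin N) : Finset (Fin N) ≃ Finset (Fin N) :=
  Equiv.finsetCongr (Equiv.subRight j)

lemma mem_rotate {j x : Fin N} {S : Finset (Fin N)} : x ∈ rotate j S ↔ x + j ∈ S := by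
  simp [rotate]

lemma count_ofNat_mem (S : Finset (Fin N)) {t : ℕ} (ht : t ≤ N) :
    Nat.count (fun i => Fin.ofNat N i ∈ S) t = #{x ∈ S | x.val < t} := by
  rw [Nat.count_eq_card_filter_range]
  refine card_nbij' (Fin.ofNat N) Fin.val (fun i hi => ?_) (fun x hx => ?_)
    (fun i hi => ?_) (fun x _ => Fin.ofNat_val_eq_self x)
  all_goals simp only [coe_filter, mem_range, Set.mem_ofPred_eq] at *
  · rw [Fin.val_ofNat, Nat.mod_eq_of_lt (by omega)]
    exact ⟨hi.2, by omega⟩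
  · rw [Fin.ofNat_val_eq_self]
    exact ⟨hx.2, hx.1⟩
  · rw [Fin.val_ofNat, Nat.mod_eq_of_lt (by omega)]

lemma height_add_period (m : ℕ) (S : Finset (Fin N)) (t : ℕ) :
    height m S (t + N) = height m S t + (N - (m + 1) * #S) := by
  have hperiod : Nat.count (fun i => Fin.ofNat N i ∈ S) N = #S := by
    rw [count_ofNat_mem S le_rfl, filter_true_of_mem fun x _ => x.is_lt]
  have hshift : ∀ i, Fin.ofNat N (N + i) = Fin.ofNat N i := fun i => by ext; simp
  simp only [height, add_comm t N, Nat.count_add, hperiod, hshift]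
  push_cast
  ring

lemma height_rotate (m : ℕ) (S : Finset (Fin N)) (j : Fin N) (k : ℕ) :
    height m (rotate j S) k = height m S (j + k) - height m S j := by
  have hshift : ∀ i, Fin.ofNat N (j + i) = Fin.ofNat N i + j := fun i => by
    ext; simp [Fin.val_add, Nat.add_comm]
  simp only [height, Nat.count_add, hshift, mem_rotate]
  push_cast
  ring

lemma isDominant_rotate_iff (m : ℕ) (S : Finset (Fin N)) (j : Fin N) :
    IsDominant m (rotate j S) ↔ ∀ k < N, height m S j < height m S (j + k + 1) := by
  simp only [IsDominant, height_rotate, sub_pos, add_assoc]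

lemma existsUnique_isDominant_rotate (m : ℕ) (S : Finset (Fin N)) (hS : (m + 1) * #S + 1 = N) :
    ∃! j : Fin N, IsDominant m (rotate j S) := by
  have hperiod : ∀ t, height m S (t + N) = height m S t + 1 := fun t => by
    have hN : (N : ℤ) = (m + 1) * #S + 1 := by exact_mod_cast hS.symm
    rw [height_add_period, hN]
    ring
  obtain ⟨j, ⟨hjN, hj⟩, huniq⟩ :=
    existsUnique_lt_forall_lt_add (Nat.pos_of_neZero N) hperiod
  refine ⟨⟨j, hjN⟩, (isDominant_rotate_iff m S _).2 hj, fun j' hj' => Fin.ext ?_⟩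
  exact huniq j' ⟨j'.is_lt, (isDominant_rotate_iff m S j').1 hj'⟩

lemma isDominant_iff (m : ℕ) (S : Finset (Fin N)) :
    IsDominant m S ↔ ∀ x ∈ S, (m + 1) * #{y ∈ S | y ≤ x} ≤ x := by
  have hcount : IsDominant m S ↔ ∀ k < N, (m + 1) * #{y ∈ S | y.val < k + 1} < k + 1 := by
    refine forall₂_congr fun k hk => ?_
    rw [height, count_ofNat_mem S hk, sub_pos]
    norm_cast
  have hle : ∀ x : Fin N, {y ∈ S | y.val < x.val + 1} = {y ∈ S | y ≤ x} := fun x => by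
    ext y
    simp only [mem_filter, Fin.le_def, Nat.lt_succ_iff]
  rw [hcount]
  constructor
  · intro h x hx
    have := h x x.is_lt
    rw [hle] at this
    omega
  · intro h k hk
    obtain hempty | ⟨y, hy⟩ := {y ∈ S | y.val < k + 1}.eq_empty_or_nonempty
    · rw [hempty, card_empty]
      omega
    -- the largest position before `k + 1` has the same rank as `k + 1` itself
    set x := {y ∈ S | y.val < k + 1}.max' ⟨y, hy⟩
    have hx : x ∈ S ∧ x.val < k + 1 := mem_filter.1 (max'_mem _ _)
    have hrank : {y ∈ S | y ≤ x} = {y ∈ S | y.val < k + 1} := by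
      ext z
      simp only [mem_filter, and_congr_right_iff]
      intro hz
      exact ⟨fun hzx => lt_of_le_of_lt (Fin.le_def.1 hzx) hx.2,
        fun hzk => le_max' _ z (mem_filter.2 ⟨hz, hzk⟩)⟩
    have := h x hx.1
    rw [hrank] at this
    omega

lemma card_filter_image_le {α : Type*} [LinearOrder α] {n : ℕ} {f : Fin n → α}
    (hf : StrictMono f) (j : Fin n) : #{y ∈ univ.image f | y ≤ f j} = j + 1 := by
  rw [filter_image, card_image_of_injective _ hf.injective, ← Fin.card_Iic]
  congr 1
  ext i
  simp [hf.le_iff_le]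

lemma isDominant_image_iff (m : ℕ) {n : ℕ} {f : Fin n → Fin N} (hf : StrictMono f) :
    IsDominant m (univ.image f) ↔ ∀ j, (m + 1) * (j + 1) ≤ f j := by
  simp [isDominant_iff, card_filter_image_le hf]

variable (N) in
def dominantWords (m n : ℕ) : Finset (Finset (Fin N)) :=
  {S ∈ powersetCard n univ | IsDominant m S}

theorem mul_card_dominantWords {m n : ℕ} (hN : (m + 1) * n + 1 = N) :
    N * #(dominantWords N m n) = N.choose n := by
  have hrotate_mem : ∀ (j : Fin N) S,
      rotate j S ∈ powersetCard n univ ↔ S ∈ powersetCard n univ := by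
    simp [rotate]
  have key := card_mul_eq_card_mul (fun S (j : Fin N) => IsDominant m (rotate j S))
    (s := powersetCard n univ) (t := univ) (m := 1) (n := #(dominantWords N m n))
    (fun S hS => by
      rw [bipartiteAbove, card_eq_one_iff_existsUnique]
      simpa using existsUnique_isDominant_rotate m S (by rw [(mem_powersetCard.1 hS).2, hN]))
    (fun j _ => card_equiv (rotate j) fun S => by
      simp only [bipartiteBelow, dominantWords, mem_filter, hrotate_mem])
  simpa [card_powersetCard] using key.symm

end Words

section Paths

variable {m n : ℕ} {a : ℕ → ℕ}

lemma _root_.IsMDyckPath.le_add_mul (ha : IsMDyckPath m n a) {i : ℕ} (hi : 1 ≤ i) :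
    ∀ k, i + k ≤ n → a (i + k) ≤ a i + m * k
  | 0, _ => by simp
  | k + 1, hk => by
    have hstep := ha.2.1 (i + k) (by omega) (by omega)
    have hprev := ha.le_add_mul hi k (by omega)
    rw [← add_assoc, mul_add_one]
    omega

/-- Position of the `j`-th down-step in the word of the path `a`. The path is read from its end,
so `a 1 = 0` pins the last down-step to position `(m + 1) * n`. -/
def downStep (m n : ℕ) (a : ℕ → ℕ) (j : Fin n) : Fin ((m + 1) * n + 1) :=
  Fin.ofNat _ ((m + 1) * (j + 1) + a (n - j))

lemma val_downStep (ha : IsMDyckPath m n a) (j : Fin n) :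
    (downStep m n a j : ℕ) = (m + 1) * (j + 1) + a (n - j) := by
  obtain ⟨r, hr⟩ : ∃ r, n = j + 1 + r := ⟨n - j - 1, by omega⟩
  have hbound := ha.le_add_mul le_rfl r (by omega)
  rw [show 1 + r = n - j by omega, ha.1] at hbound
  have hn : (m + 1) * n = (m + 1) * (j + 1) + (m + 1) * r := by rw [← mul_add, ← hr]
  rw [downStep, Fin.val_ofNat, Nat.mod_eq_of_lt]
  nlinarith

lemma strictMono_downStep (ha : IsMDyckPath m n a) : StrictMono (downStep m n a) := by
  intro j j' hjj'
  obtain ⟨d, hd⟩ : ∃ d, (j' : ℕ) = j + d + 1 := ⟨j' - j - 1, by omega⟩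
  have hdrop := ha.le_add_mul (i := n - j') (by omega) (d + 1) (by omega)
  rw [show n - j' + (d + 1) = n - j by omega, hd] at hdrop
  rw [Fin.lt_def, val_downStep ha, val_downStep ha, hd]
  nlinarith

def toWord (m n : ℕ) (a : ℕ → ℕ) : Finset (Fin ((m + 1) * n + 1)) :=
  univ.image (downStep m n a)

lemma toWord_mem_dominantWords (ha : IsMDyckPath m n a) :
    toWord m n a ∈ dominantWords _ m n := by
  have hmono := strictMono_downStep ha
  refine mem_filter.2 ⟨mem_powersetCard.2 ⟨subset_univ _, ?_⟩, ?_⟩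
  · rw [toWord, card_image_of_injective _ hmono.injective, card_univ, Fintype.card_fin]
  · refine (isDominant_image_iff m hmono).2 fun j => ?_
    rw [val_downStep ha]
    exact Nat.le_add_right _ _

lemma injOn_toWord : Set.InjOn (toWord m n) {a | IsMDyckPath m n a} := by
  intro a ha a' ha' h
  have hdown : downStep m n a = downStep m n a' := by
    refine ((strictMono_downStep ha).range_inj (strictMono_downStep ha')).1 ?_
    rw [← Set.image_univ, ← Set.image_univ, ← coe_univ, ← coe_image, ← coe_image]
    exact congrArg _ h
  funext i
  by_cases hi : 1 ≤ i ∧ i ≤ n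
  · have := congrArg Fin.val (congrFun hdown ⟨n - i, by omega⟩)
    rw [val_downStep ha, val_downStep ha', show n - (n - i) = i by omega] at this
    omega
  · rw [ha.2.2 i (by omega), ha'.2.2 i (by omega)]

lemma exists_toWord_eq {S : Finset (Fin ((m + 1) * n + 1))} (hS : S ∈ dominantWords _ m n) :
    ∃ a, IsMDyckPath m n a ∧ toWord m n a = S := by
  obtain ⟨hSpow, hdom⟩ := mem_filter.1 hS
  have hcard : #S = n := (mem_powersetCard.1 hSpow).2
  set e := S.orderEmbOfFin hcard
  have himage : univ.image e = S := image_orderEmbOfFin_univ S hcard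
  have hlow : ∀ j, (m + 1) * (j + 1) ≤ e j :=
    (isDominant_image_iff m e.strictMono).1 (himage ▸ hdom)
  let a : ℕ → ℕ := fun i =>
    if h : 1 ≤ i ∧ i ≤ n then e ⟨n - i, by omega⟩ - (m + 1) * (n + 1 - i) else 0
  have ha : ∀ i (h : 1 ≤ i ∧ i ≤ n),
      a i = e ⟨n - i, by omega⟩ - (m + 1) * (n + 1 - i) := fun i h => dif_pos h
  have hdown : downStep m n a = e := by
    funext j
    have hj : (⟨n - (n - j), by omega⟩ : Fin n) = j := Fin.ext (by simp; omega)
    have := hlow j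
    rw [Fin.ext_iff, downStep, Fin.val_ofNat, ha (n - j) (by omega), hj,
      show n + 1 - (n - j) = j + 1 by omega, Nat.add_sub_cancel' this,
      Nat.mod_eq_of_lt (e j).is_lt]
  refine ⟨a, ⟨?_, fun i hi hin => ?_, fun i hi => dif_neg (by omega)⟩,
    by rw [toWord, hdown, himage]⟩
  · by_cases hn : n = 0
    · exact dif_neg (by omega)
    · have hlast := hlow ⟨n - 1, by omega⟩
      have htop := (e ⟨n - 1, by omega⟩).is_lt
      rw [ha 1 (by omega)]
      simp only [show n - 1 + 1 = n by omega, show n + 1 - 1 = n by omega] at hlast ⊢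
      omega
  · have hlt := e.strictMono (show (⟨n - (i + 1), by omega⟩ : Fin n) < ⟨n - i, by omega⟩ by
      rw [Fin.mk_lt_mk]; omega)
    have h₁ := hlow ⟨n - (i + 1), by omega⟩
    rw [ha i (by omega), ha (i + 1) (by omega)]
    rw [show n - (i + 1) + 1 = n - i by omega] at h₁
    rw [show n + 1 - (i + 1) = n - i by omega, show n + 1 - i = n - i + 1 by omega, mul_add_one]
    omega

theorem ncard_mDyckPaths_eq (m n : ℕ) :
    {a | IsMDyckPath m n a}.ncard = #(dominantWords ((m + 1) * n + 1) m n) := by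
  rw [← injOn_toWord.ncard_image, ← Set.ncard_coe_finset]
  congr 1
  ext S
  constructor
  · rintro ⟨a, ha, rfl⟩
    exact toWord_mem_dominantWords ha
  · intro hS
    exact exists_toWord_eq hS

end Paths

end MDyck

theorem card_mDyckPaths_general (m n : ℕ) :
    {a : ℕ → ℕ | IsMDyckPath m n a}.ncard * (m * n + 1) = Nat.choose ((m + 1) * n) n := by
  have hups : (m + 1) * n + 1 - n = m * n + 1 := by rw [add_one_mul]; omega
  apply Nat.eq_of_mul_eq_mul_left ((m + 1) * n).succ_pos
  calc ((m + 1) * n + 1) * ({a | IsMDyckPath m n a}.ncard * (m * n + 1))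
      = ((m + 1) * n + 1).choose n * ((m + 1) * n + 1 - n) := by
        rw [MDyck.ncard_mDyckPaths_eq, ← mul_assoc, MDyck.mul_card_dominantWords rfl, hups]
    _ = ((m + 1) * n + 1) * ((m + 1) * n).choose n := by
        rw [← Nat.choose_mul_succ_eq, mul_comm]

/-- The number of `m`-Dyck paths of semilength `n` equals the Fuß-Catalan number
`(1/(mn+1)) * C((m+1)n, n)`. -/
theorem card_mDyckPaths (m n : ℕ) (hm : 0 < m) (hn : 0 < n) :
    {a : ℕ → ℕ | IsMDyckPath m n a}.ncard * (m * n + 1) = Nat.choose ((m + 1) * n) n :=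
  card_mDyckPaths_general m n
end

section
/- For the dihedral group I_2(k), q^{mk} · Cat^(m)(I_2(k); q, q^{−1}) = [2+mk]_q [k+mk]_q / ([2]_q [k]_q), where Cat^(m)(I_2(k); q, t) = ∑_{j=0}^m (qt)^{m−j} [jk+1]_{q,t}. -/
open Finset

/-- The `q`-integer `[n]_x = 1 + x + … + x^{n-1}` evaluated at a rational function `x`. -/
noncomputable def qIntF (n : ℕ) (x : RatFunc ℚ) : RatFunc ℚ := ∑ i ∈ Finset.range n, x ^ i

/-- The `q,t`-integer `[n]_{x,y} = x^{n-1} + x^{n-2} y + … + y^{n-1}`. -/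
noncomputable def qtIntF (n : ℕ) (x y : RatFunc ℚ) : RatFunc ℚ :=
  ∑ i ∈ Finset.range n, x ^ (n - 1 - i) * y ^ i

/-- The `q,t`-Fuß-Catalan number of `I_2(k)`,
`Cat^(m)(I_2(k); x, y) = ∑_{j=0}^m (xy)^{m-j} [jk+1]_{x,y}`. -/
noncomputable def qtCatDihedralF (m k : ℕ) (x y : RatFunc ℚ) : RatFunc ℚ :=
  ∑ j ∈ Finset.range (m + 1), (x * y) ^ (m - j) * qtIntF (j * k + 1) x y

/-!
Multiplying by `(q² - 1)`, each summand `q^{mk} [jk+1]_{q,q⁻¹}` telescopes to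
`q^{mk+2} q^{jk} - q^{(m-j)k}`, so `q^{mk} Cat^(m)(I_2(k); q, q⁻¹) (q² - 1) = (q^{mk+2} - 1) [m+1]_{q^k}`.
Multiplying further by `q^k - 1` gives `(q^{mk+2} - 1)(q^{mk+k} - 1)`, which is the right-hand side
times `(q² - 1)(q^k - 1)`.
-/

theorem RatFunc.X_pow_ne_one {K : Type*} [Field K] {n : ℕ} (hn : 0 < n) :
    (RatFunc.X : RatFunc K) ^ n ≠ 1 := by
  rw [← RatFunc.algebraMap_X, ← map_pow, ← map_one (algebraMap (Polynomial K) (RatFunc K)), Ne,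
    (IsFractionRing.injective (Polynomial K) (RatFunc K)).eq_iff, ← sub_eq_zero, ← Polynomial.C_1]
  exact Polynomial.X_pow_sub_C_ne_zero hn 1

theorem qIntF_mul_sub_one (n : ℕ) (x : RatFunc ℚ) : qIntF n x * (x - 1) = x ^ n - 1 :=
  geom_sum_mul x n

theorem qIntF_ne_zero {n : ℕ} {x : RatFunc ℚ} (hx : x ^ n ≠ 1) : qIntF n x ≠ 0 := fun h =>
  hx (sub_eq_zero.mp (by rw [← qIntF_mul_sub_one, h, zero_mul]))

theorem qtIntF_mul_sub (n : ℕ) (x y : RatFunc ℚ) : qtIntF n x y * (x - y) = x ^ n - y ^ n := by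
  rw [qtIntF, ← geom_sum₂_mul, geom_sum₂_comm]
  simp only [mul_comm]

theorem pow_mul_qtIntF_inv_mul_sq_sub_one {x : RatFunc ℚ} (hx : x ≠ 0) (n : ℕ) :
    x ^ n * qtIntF (n + 1) x x⁻¹ * (x ^ 2 - 1) = x ^ (2 * n + 2) - 1 := by
  calc x ^ n * qtIntF (n + 1) x x⁻¹ * (x ^ 2 - 1)
      = x ^ (n + 1) * (qtIntF (n + 1) x x⁻¹ * (x - x⁻¹)) := by field_simp; ring
    _ = x ^ (2 * n + 2) - 1 := by
        rw [qtIntF_mul_sub, mul_sub, inv_pow, mul_inv_cancel₀ (pow_ne_zero _ hx), ← pow_add]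
        ring_nf

theorem pow_mul_qtCatDihedralF_inv_mul_sq_sub_one {x : RatFunc ℚ} (hx : x ≠ 0) (m k : ℕ) :
    x ^ (m * k) * qtCatDihedralF m k x x⁻¹ * (x ^ 2 - 1)
      = (x ^ (m * k + 2) - 1) * qIntF (m + 1) (x ^ k) := by
  have hterm : ∀ j ∈ range (m + 1),
      x ^ (m * k) * ((x * x⁻¹) ^ (m - j) * qtIntF (j * k + 1) x x⁻¹) * (x ^ 2 - 1)
        = x ^ (m * k + 2) * (x ^ k) ^ j - (x ^ k) ^ (m - j) := by
    intro j hj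
    obtain ⟨d, rfl⟩ := Nat.exists_eq_add_of_le (Nat.lt_succ_iff.mp (mem_range.mp hj))
    rw [mul_inv_cancel₀ hx, one_pow, one_mul, Nat.add_sub_cancel_left]
    calc x ^ ((j + d) * k) * qtIntF (j * k + 1) x x⁻¹ * (x ^ 2 - 1)
        = x ^ (d * k) * (x ^ (j * k) * qtIntF (j * k + 1) x x⁻¹ * (x ^ 2 - 1)) := by ring
      _ = x ^ (d * k) * (x ^ (2 * (j * k) + 2) - 1) := by
          rw [pow_mul_qtIntF_inv_mul_sq_sub_one hx]
      _ = x ^ ((j + d) * k + 2) * (x ^ k) ^ j - (x ^ k) ^ d := by ring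
  have hreflect : ∑ j ∈ range (m + 1), (x ^ k) ^ (m - j) = qIntF (m + 1) (x ^ k) := by
    simpa [qIntF] using sum_range_reflect (fun j => (x ^ k) ^ j) (m + 1)
  rw [qtCatDihedralF, mul_sum, sum_mul, sum_congr rfl hterm, sum_sub_distrib, ← mul_sum, hreflect,
    qIntF, sub_one_mul]

theorem pow_mul_qtCatDihedralF_inv {x : RatFunc ℚ} (hx : x ≠ 0) (m k : ℕ) (hx2 : x ^ 2 ≠ 1)
    (hxk : x ^ k ≠ 1) :
    x ^ (m * k) * qtCatDihedralF m k x x⁻¹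
      = qIntF (2 + m * k) x * qIntF (k + m * k) x / (qIntF 2 x * qIntF k x) := by
  have hx1 : (x - 1) ^ 2 ≠ 0 := pow_ne_zero 2 (sub_ne_zero.mpr (by rintro rfl; simp at hx2))
  rw [eq_div_iff (mul_ne_zero (qIntF_ne_zero hx2) (qIntF_ne_zero hxk))]
  refine mul_right_cancel₀ hx1 ?_
  calc x ^ (m * k) * qtCatDihedralF m k x x⁻¹ * (qIntF 2 x * qIntF k x) * (x - 1) ^ 2
      = x ^ (m * k) * qtCatDihedralF m k x x⁻¹ * (x ^ 2 - 1) * (x ^ k - 1) := by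
        rw [← qIntF_mul_sub_one 2, ← qIntF_mul_sub_one k]; ring
    _ = (x ^ (m * k + 2) - 1) * (x ^ (m * k + k) - 1) := by
        rw [pow_mul_qtCatDihedralF_inv_mul_sq_sub_one hx, mul_assoc, qIntF_mul_sub_one, ← pow_mul,
          mul_comm k, add_one_mul]
    _ = qIntF (2 + m * k) x * qIntF (k + m * k) x * (x - 1) ^ 2 := by
        rw [add_comm 2, add_comm k, ← qIntF_mul_sub_one (m * k + 2),
          ← qIntF_mul_sub_one (m * k + k)]
        ring

theorem qtCatDihedral_specialization_general (m k : ℕ) (hk : 2 ≤ k) :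
    (RatFunc.X : RatFunc ℚ) ^ (m * k) * qtCatDihedralF m k RatFunc.X RatFunc.X⁻¹
      = qIntF (2 + m * k) RatFunc.X * qIntF (k + m * k) RatFunc.X
        / (qIntF 2 RatFunc.X * qIntF k RatFunc.X) :=
  pow_mul_qtCatDihedralF_inv RatFunc.X_ne_zero m k (RatFunc.X_pow_ne_one two_pos)
    (RatFunc.X_pow_ne_one (by omega))

/-- For the dihedral group `I_2(k)`:
`q^{mk} · Cat^(m)(I_2(k); q, q⁻¹) = [2+mk]_q [k+mk]_q / ([2]_q [k]_q)`. -/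
theorem qtCatDihedral_specialization (m k : ℕ) (hm : 1 ≤ m) (hk : 2 ≤ k) :
    (RatFunc.X : RatFunc ℚ) ^ (m * k) * qtCatDihedralF m k RatFunc.X RatFunc.X⁻¹
      = qIntF (2 + m * k) RatFunc.X * qIntF (k + m * k) RatFunc.X
        / (qIntF 2 RatFunc.X * qIntF k RatFunc.X) :=
  qtCatDihedral_specialization_general m k hk
end

section
/- For the cyclic group C_k acting as above, the det-isotypic component ℂ[x,y]^ε equals x·ℂ[x,y]^{C_k} + y^{k−1}·ℂ[x,y]^{C_k}. -/
open MvPolynomial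

/-!
The generator acts diagonally on monomials: `x^a y^b` is scaled by its weight `ζ^a ζ⁻¹^b`, and the
weight is multiplicative. Hence `p` lies in the `ζ`-eigenspace iff every monomial of `p` has
weight `ζ`. Such a monomial is divisible by `x` (weight `ζ`) unless it is a pure power `y^b`;
then `ζ⁻¹^(b+1) = 1`, so `k ∣ b + 1` and `y^(k-1)` (weight `ζ⁻¹^(k-1) = ζ`) divides it. In both
cases the cofactor has weight `1`, i.e. is invariant.
-/

/-- The action of the generator of the cyclic group `C_k` on `ℂ[x,y]`
(with `x = X 0`, `y = X 1`): `x ↦ ζ x`, `y ↦ ζ⁻¹ y`. -/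
noncomputable def cyclicGen (ζ : ℂ) : MvPolynomial (Fin 2) ℂ →ₐ[ℂ] MvPolynomial (Fin 2) ℂ :=
  MvPolynomial.aeval ![MvPolynomial.C ζ * MvPolynomial.X 0, MvPolynomial.C ζ⁻¹ * MvPolynomial.X 1]

noncomputable def cyclicWeight (ζ : ℂ) (m : Fin 2 →₀ ℕ) : ℂ := ζ ^ m 0 * ζ⁻¹ ^ m 1

section Weight

variable {ζ : ℂ}

lemma cyclicWeight_add (m n : Fin 2 →₀ ℕ) :
    cyclicWeight ζ (m + n) = cyclicWeight ζ m * cyclicWeight ζ n := by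
  simp only [cyclicWeight, Finsupp.add_apply, pow_add]
  ring

@[simp]
lemma cyclicWeight_single_zero (a : ℕ) : cyclicWeight ζ (Finsupp.single 0 a) = ζ ^ a := by
  simp [cyclicWeight]

@[simp]
lemma cyclicWeight_single_one (a : ℕ) : cyclicWeight ζ (Finsupp.single 1 a) = ζ⁻¹ ^ a := by
  simp [cyclicWeight]

lemma cyclicGen_monomial (m : Fin 2 →₀ ℕ) (c : ℂ) :
    cyclicGen ζ (monomial m c) = C (cyclicWeight ζ m) * monomial m c := by
  rw [cyclicGen, aeval_monomial, monomial_eq,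
    Finsupp.prod_fintype _ _ (fun _ => pow_zero _), Finsupp.prod_fintype _ _ (fun _ => pow_zero _)]
  simp only [Fin.prod_univ_two, Matrix.cons_val_zero, Matrix.cons_val_one, algebraMap_eq, mul_pow, ← C_pow, C_mul, cyclicWeight]
  ring

lemma coeff_cyclicGen (p : MvPolynomial (Fin 2) ℂ) (m : Fin 2 →₀ ℕ) :
    coeff m (cyclicGen ζ p) = cyclicWeight ζ m * coeff m p := by
  induction p using MvPolynomial.induction_on' with
  | monomial n c =>
    rw [cyclicGen_monomial, coeff_C_mul, coeff_monomial]
    by_cases h : n = m <;> simp [h]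
  | add p q hp hq => rw [map_add, coeff_add, coeff_add, hp, hq, mul_add]

lemma cyclicGen_eq_C_mul_iff (c : ℂ) (p : MvPolynomial (Fin 2) ℂ) :
    cyclicGen ζ p = C c * p ↔ ∀ m ∈ p.support, cyclicWeight ζ m = c := by
  refine ⟨fun hp m hm => ?_, fun h => ?_⟩
  · have hcoeff := congrArg (coeff m) hp
    rw [coeff_cyclicGen, coeff_C_mul] at hcoeff
    exact mul_right_cancel₀ (mem_support_iff.mp hm) hcoeff
  · ext m
    rw [coeff_cyclicGen, coeff_C_mul]
    by_cases hm : m ∈ p.support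
    · rw [h m hm]
    · rw [notMem_support_iff.mp hm, mul_zero, mul_zero]

lemma cyclicGen_monomial_mul_eq_C_mul {m : Fin 2 →₀ ℕ} {c : ℂ} (hm : cyclicWeight ζ m = c)
    {r : MvPolynomial (Fin 2) ℂ} (hr : cyclicGen ζ r = r) :
    cyclicGen ζ (monomial m 1 * r) = C c * (monomial m 1 * r) := by
  rw [map_mul, cyclicGen_monomial, hm, hr, mul_assoc]

lemma exists_monomial_eq_monomial_mul_invariant (hζ : ζ ≠ 0) {n m : Fin 2 →₀ ℕ} (hnm : n ≤ m)
    (hn : cyclicWeight ζ n = ζ) (hm : cyclicWeight ζ m = ζ) (c : ℂ) :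
    ∃ r, cyclicGen ζ r = r ∧ monomial m c = monomial n 1 * r := by
  obtain ⟨m', rfl⟩ := exists_add_of_le hnm
  have hm' : cyclicWeight ζ m' = 1 := by
    rw [cyclicWeight_add, hn] at hm
    exact mul_eq_left₀ hζ |>.mp hm
  refine ⟨monomial m' c, ?_, ?_⟩
  · rw [cyclicGen_monomial, hm', C_1, one_mul]
  · rw [monomial_mul, one_mul]

end Weight

section PrimitiveRoot

variable {k : ℕ} {ζ : ℂ}

lemma inv_pow_pred_eq (hk : 1 ≤ k) (hζ : IsPrimitiveRoot ζ k) : ζ⁻¹ ^ (k - 1) = ζ := by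
  rw [inv_pow, inv_eq_iff_eq_inv, ← mul_eq_one_iff_eq_inv₀ (hζ.ne_zero (by omega)), ← pow_succ,
    Nat.sub_add_cancel hk, hζ.pow_eq_one]

lemma pred_le_of_cyclicWeight_eq (hζ : IsPrimitiveRoot ζ k) (hζ0 : ζ ≠ 0) {m : Fin 2 →₀ ℕ}
    (hm : cyclicWeight ζ m = ζ) (hm0 : m 0 = 0) : k - 1 ≤ m 1 := by
  rw [cyclicWeight, hm0, pow_zero, one_mul] at hm
  have hpow : ζ⁻¹ ^ (m 1 + 1) = 1 := by rw [pow_succ, hm, mul_inv_cancel₀ hζ0]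
  have := Nat.le_of_dvd (Nat.succ_pos _) (hζ.inv.dvd_of_pow_eq_one _ hpow)
  omega

lemma exists_monomial_eq_X_mul_add_X_pow_mul (hk : 1 ≤ k) (hζ : IsPrimitiveRoot ζ k)
    {m : Fin 2 →₀ ℕ} (hm : cyclicWeight ζ m = ζ) (c : ℂ) :
    ∃ r s, cyclicGen ζ r = r ∧ cyclicGen ζ s = s ∧
      monomial m c = X 0 * r + X 1 ^ (k - 1) * s := by
  have hζ0 : ζ ≠ 0 := hζ.ne_zero (by omega)
  by_cases hm0 : m 0 = 0
  · obtain ⟨s, hs, hms⟩ := exists_monomial_eq_monomial_mul_invariant hζ0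
      (Finsupp.single_le_iff.mpr (pred_le_of_cyclicWeight_eq hζ hζ0 hm hm0))
      (by rw [cyclicWeight_single_one, inv_pow_pred_eq hk hζ]) hm c
    exact ⟨0, s, map_zero _, hs, by rw [hms, X_pow_eq_monomial, mul_zero, zero_add]⟩
  · obtain ⟨r, hr, hmr⟩ := exists_monomial_eq_monomial_mul_invariant hζ0
      (Finsupp.single_le_iff.mpr (Nat.one_le_iff_ne_zero.mpr hm0))
      (by rw [cyclicWeight_single_zero, pow_one]) hm c
    exact ⟨r, 0, hr, map_zero _, by rw [hmr, X, mul_zero, add_zero]⟩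

lemma exists_eq_X_mul_add_X_pow_mul (hk : 1 ≤ k) (hζ : IsPrimitiveRoot ζ k)
    {p : MvPolynomial (Fin 2) ℂ} (hp : cyclicGen ζ p = C ζ * p) :
    ∃ r s, cyclicGen ζ r = r ∧ cyclicGen ζ s = s ∧ p = X 0 * r + X 1 ^ (k - 1) * s := by
  rw [cyclicGen_eq_C_mul_iff] at hp
  rw [p.as_sum]
  refine Finset.sum_induction _
    (fun q => ∃ r s, cyclicGen ζ r = r ∧ cyclicGen ζ s = s ∧ q = X 0 * r + X 1 ^ (k - 1) * s)
    ?_ ?_ ?_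
  · rintro _ _ ⟨r, s, hr, hs, rfl⟩ ⟨r', s', hr', hs', rfl⟩
    exact ⟨r + r', s + s', by rw [map_add, hr, hr'], by rw [map_add, hs, hs'], by ring⟩
  · exact ⟨0, 0, map_zero _, map_zero _, by ring⟩
  · exact fun m hm => exists_monomial_eq_X_mul_add_X_pow_mul hk hζ (hp m hm) _

lemma cyclicGen_X_mul_add_X_pow_mul (hk : 1 ≤ k) (hζ : IsPrimitiveRoot ζ k)
    {r s : MvPolynomial (Fin 2) ℂ} (hr : cyclicGen ζ r = r) (hs : cyclicGen ζ s = s) :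
    cyclicGen ζ (X 0 * r + X 1 ^ (k - 1) * s) = C ζ * (X 0 * r + X 1 ^ (k - 1) * s) := by
  rw [X, X_pow_eq_monomial, map_add, mul_add,
    cyclicGen_monomial_mul_eq_C_mul (by rw [cyclicWeight_single_zero, pow_one]) hr,
    cyclicGen_monomial_mul_eq_C_mul (by rw [cyclicWeight_single_one, inv_pow_pred_eq hk hζ]) hs]

end PrimitiveRoot

/-- For `C_k` acting on `ℂ[x,y]` as above (`ζ` a primitive `k`-th root of unity), the
det-isotypic component `ℂ[x,y]^ε` equals `x·ℂ[x,y]^{C_k} + y^{k-1}·ℂ[x,y]^{C_k}`. -/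
theorem cyclic_det_component (k : ℕ) (hk : 1 ≤ k) (ζ : ℂ) (hζ : IsPrimitiveRoot ζ k) :
    {p : MvPolynomial (Fin 2) ℂ | cyclicGen ζ p = MvPolynomial.C ζ * p}
      = {p : MvPolynomial (Fin 2) ℂ | ∃ r s : MvPolynomial (Fin 2) ℂ,
          cyclicGen ζ r = r ∧ cyclicGen ζ s = s ∧
          p = MvPolynomial.X 0 * r + MvPolynomial.X 1 ^ (k - 1) * s} := by
  ext p
  refine ⟨exists_eq_X_mul_add_X_pow_mul hk hζ, ?_⟩
  rintro ⟨r, s, hr, hs, rfl⟩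
  exact cyclicGen_X_mul_add_X_pow_mul hk hζ hr hs
end
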